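/- arXiv:2112.05632 — 6 statements merged into one kernel-verified Lean document; each statement's English description precedes it below -/
import Mathlib

section
/- If two allocations A and A' both maximize the leximin ordering over a convex set of feasible utility vectors, then they induce the same utility for every agent. Formally: let F ⊆ ℝ^n be a convex set of utility vectors, and suppose u, v ∈ F are both leximin-optimal in F (i.e., their sorted vectors are maximal in the lexicographic order among sorted vectors of elements of F). Then u = v. -/
/-!
Two leximin optima `u`, `v` have the same sorted vector, by antisymmetry. The sum of the `j + 1`
smallest entries is concave in the vector, so the midpoint `m` of `u` and `v` has every prefix
sum of its sorted vector at least that of `u`; since `u` is leximin-maximal this forces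
`sortVec m = sortVec u`. Hence `m`, `u`, `v` have equal sums of squares, and the parallelogram
identity gives `∑ (u i - v i) ^ 2 = 0`.
-/

/-- The non-decreasing rearrangement of a vector. -/
noncomputable def sortVec {n : ℕ} (x : Fin n → ℝ) : Fin n → ℝ := x ∘ Tuple.sort x

/-- Leximin (weak) order: compare sorted vectors lexicographically. -/
noncomputable def leximinLE {n : ℕ} (x y : Fin n → ℝ) : Prop :=
  toLex (sortVec x) ≤ toLex (sortVec y)

open Finset

section PrefixSums

variable {ι M : Type*}

theorem Monotone.sum_Iic_le_sum [LinearOrder ι] [LocallyFiniteOrderBot ι] [AddCommGroup M]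
    [PartialOrder M] [IsOrderedAddMonoid M] {y : ι → M} (hy : Monotone y) (j : ι)
    {T : Finset ι} (hT : #T = #(Iic j)) :
    ∑ i ∈ Iic j, y i ≤ ∑ i ∈ T, y i := by
  have hbelow : ∑ i ∈ Iic j \ T, y i ≤ #(Iic j \ T) • y j :=
    sum_le_card_nsmul _ _ _ fun i hi ↦ hy (mem_Iic.1 (mem_sdiff.1 hi).1)
  have habove : #(T \ Iic j) • y j ≤ ∑ i ∈ T \ Iic j, y i :=
    card_nsmul_le_sum _ _ _ fun i hi ↦ hy (not_le.1 (mt mem_Iic.2 (mem_sdiff.1 hi).2)).le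
  rw [← sub_nonneg, ← sum_sdiff_sub_sum_sdiff, sub_nonneg]
  exact hbelow.trans (card_sdiff_comm hT.symm ▸ habove)

theorem Pi.Lex.exists_sum_Iic_lt [PartialOrder ι] [LocallyFiniteOrderBot ι] [AddCommMonoid M]
    [PartialOrder M] [IsOrderedCancelAddMonoid M] {a b : ι → M} (h : toLex a < toLex b) :
    ∃ j, ∑ i ∈ Iic j, a i < ∑ i ∈ Iic j, b i := by
  obtain ⟨j, hpre, hj⟩ := h
  refine ⟨j, sum_lt_sum (fun i hi ↦ ?_) ⟨j, mem_Iic.2 le_rfl, hj⟩⟩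
  rcases (mem_Iic.1 hi).lt_or_eq with hij | rfl
  · exact (hpre i hij).le
  · exact hj.le

end PrefixSums

section SortVec

variable {n : ℕ}

theorem sum_comp_sortVec {M : Type*} [AddCommMonoid M] (f : ℝ → M) (x : Fin n → ℝ) :
    ∑ i, f (sortVec x i) = ∑ i, f (x i) :=
  Equiv.sum_comp (Tuple.sort x) (f ∘ x)

theorem sum_Iic_sortVec_eq_sum_map (x : Fin n → ℝ) (j : Fin n) :
    ∑ i ∈ Iic j, sortVec x i = ∑ i ∈ (Iic j).map (Tuple.sort x).toEmbedding, x i := by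
  rw [sum_map]
  rfl

theorem sum_Iic_sortVec_le (x : Fin n → ℝ) (j : Fin n) {T : Finset (Fin n)}
    (hT : #T = #(Iic j)) : ∑ i ∈ Iic j, sortVec x i ≤ ∑ i ∈ T, x i := by
  have hperm : ∑ i ∈ T, x i = ∑ i ∈ T.map (Tuple.sort x).symm.toEmbedding, sortVec x i := by
    simp [sum_map, sortVec]
  rw [hperm]
  exact (Tuple.monotone_sort x).sum_Iic_le_sum j (by rwa [card_map])

/-- A minimum of the linear maps `x ↦ ∑ i ∈ T, x i` over `#T = j + 1`. -/
theorem concaveOn_sum_Iic_sortVec (j : Fin n) :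
    ConcaveOn ℝ Set.univ (fun x : Fin n → ℝ ↦ ∑ i ∈ Iic j, sortVec x i) := by
  refine ⟨convex_univ, fun x _ y _ a b _ _ _ ↦ ?_⟩
  set S := (Iic j).map (Tuple.sort (a • x + b • y)).toEmbedding
  have hS : #S = #(Iic j) := card_map _
  calc a • ∑ i ∈ Iic j, sortVec x i + b • ∑ i ∈ Iic j, sortVec y i
      ≤ a • ∑ i ∈ S, x i + b • ∑ i ∈ S, y i := by
        gcongr
        · exact sum_Iic_sortVec_le x j hS
        · exact sum_Iic_sortVec_le y j hS
    _ = ∑ i ∈ Iic j, sortVec (a • x + b • y) i := by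
        rw [sum_Iic_sortVec_eq_sum_map, smul_sum, smul_sum, ← sum_add_distrib]
        rfl

theorem sortVec_add_smul_eq_of_leximinLE {u v : Fin n → ℝ} (huv : sortVec u = sortVec v)
    {a b : ℝ} (ha : 0 ≤ a) (hb : 0 ≤ b) (hab : a + b = 1)
    (hle : leximinLE (a • u + b • v) u) : sortVec (a • u + b • v) = sortVec u := by
  refine toLex.injective (hle.eq_of_not_lt fun hlt ↦ ?_)
  obtain ⟨j, hj⟩ := Pi.Lex.exists_sum_Iic_lt hlt
  have hconc := (concaveOn_sum_Iic_sortVec j).2 (Set.mem_univ u) (Set.mem_univ v) ha hb hab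
  simp only [← huv, ← add_smul, hab, one_smul] at hconc
  exact hj.not_ge hconc

end SortVec

theorem eq_of_sum_sq_midpoint_eq {ι : Type*} [Fintype ι] {u v : ι → ℝ}
    (hv : ∑ i, v i ^ 2 = ∑ i, u i ^ 2)
    (hm : ∑ i, ((1 / 2 : ℝ) • u + (1 / 2 : ℝ) • v) i ^ 2 = ∑ i, u i ^ 2) : u = v := by
  have hparallelogram : ∑ i, (u i - v i) ^ 2
      = 2 * ∑ i, u i ^ 2 + 2 * ∑ i, v i ^ 2
        - 4 * ∑ i, ((1 / 2 : ℝ) • u + (1 / 2 : ℝ) • v) i ^ 2 := by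
    simp only [mul_sum, ← sum_add_distrib, ← sum_sub_distrib, Pi.add_apply, Pi.smul_apply,
      smul_eq_mul]
    exact sum_congr rfl fun i _ ↦ by ring
  rw [hv, hm] at hparallelogram
  have hzero := (sum_eq_zero_iff_of_nonneg fun i _ ↦ sq_nonneg (u i - v i)).1
    (by linarith)
  funext i
  simpa [sub_eq_zero] using hzero i (mem_univ i)

/-- If two utility vectors in a convex set `F` are both leximin-optimal in `F`,
then they are equal. -/
theorem leximin_optimal_unique {n : ℕ} (F : Set (Fin n → ℝ)) (hF : Convex ℝ F)
    (u v : Fin n → ℝ) (hu : u ∈ F) (hv : v ∈ F)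
    (hmaxu : ∀ w ∈ F, leximinLE w u) (hmaxv : ∀ w ∈ F, leximinLE w v) :
    u = v := by
  have huv : sortVec u = sortVec v := toLex.injective ((hmaxv u hu).antisymm (hmaxu v hv))
  set m := (1 / 2 : ℝ) • u + (1 / 2 : ℝ) • v
  have hmF : m ∈ F := hF hu hv (by norm_num) (by norm_num) (by norm_num)
  have hmu : sortVec m = sortVec u :=
    sortVec_add_smul_eq_of_leximinLE huv (by norm_num) (by norm_num) (by norm_num) (hmaxu m hmF)
  have hsq {x y : Fin n → ℝ} (h : sortVec x = sortVec y) : ∑ i, x i ^ 2 = ∑ i, y i ^ 2 := by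
    rw [← sum_comp_sortVec (· ^ 2) x, ← sum_comp_sortVec (· ^ 2) y, h]
  exact eq_of_sum_sq_midpoint_eq (hsq huv.symm) (hsq hmu)
end

section
/- ε-change preserves leximin improvement: let x, y ∈ ℝ^n with y strictly better than x in the leximin order. Then there exists ε₀ > 0 such that for all ε ∈ (0, ε₀), the vector x + ε(y − x) is strictly better than x in the leximin order. -/
/-- Strict leximin order: compare sorted vectors lexicographically. -/
noncomputable def leximinLT {n : ℕ} (x y : Fin n → ℝ) : Prop :=
  toLex (sortVec x) < toLex (sortVec y)

open Finset

section countLE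

variable {α : Type*} [LinearOrder α] {n : ℕ}

def countLE (v : Fin n → α) (s : α) : ℕ := #{i | v i ≤ s}

theorem countLE_le (v : Fin n → α) (s : α) : countLE v s ≤ n :=
  (card_filter_le _ _).trans_eq (card_fin n)

theorem countLE_mono (v : Fin n → α) : Monotone (countLE v) := fun _ _ hst =>
  card_le_card fun _ hi => by
    simp only [mem_filter, mem_univ, true_and] at hi ⊢
    exact hi.trans hst

theorem countLE_comp_perm (v : Fin n → α) (σ : Equiv.Perm (Fin n)) (s : α) :
    countLE (v ∘ σ) s = countLE v s :=
  card_equiv σ fun _ => by simp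

theorem Monotone.lt_countLE_iff {g : Fin n → α} (hg : Monotone g) (s : α) (j : Fin n) :
    (j : ℕ) < countLE g s ↔ g j ≤ s := by
  refine ⟨fun hj => ?_, fun hj => ?_⟩
  · by_contra! hlt
    have hsub : univ.filter (g · ≤ s) ⊆ Iio j := fun i hi => by
      simp only [mem_filter, mem_univ, true_and] at hi
      exact mem_Iio.2 (hg.reflect_lt (hi.trans_lt hlt))
    exact ((card_le_card hsub).trans_eq (Fin.card_Iio j)).not_gt hj
  · have hsub : Iic j ⊆ univ.filter (g · ≤ s) := fun i hi => by
      simpa using (hg (mem_Iic.1 hi)).trans hj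
    exact (Fin.card_Iic j).symm.trans_le (card_le_card hsub)

end countLE

variable {n : ℕ}

theorem sortVec_le_iff (v : Fin n → ℝ) (s : ℝ) (j : Fin n) :
    sortVec v j ≤ s ↔ (j : ℕ) < countLE v s := by
  rw [← countLE_comp_perm v (Tuple.sort v), (Tuple.monotone_sort v).lt_countLE_iff]
  rfl

/-- The sorted vectors agree up to position `countLE v t`, where `v` has an entry `> t`
and `u` one `≤ t`. -/
theorem leximinLT_of_countLE {u v : Fin n → ℝ} {t : ℝ}
    (hbelow : ∀ s < t, countLE u s = countLE v s) (hat : countLE v t < countLE u t) :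
    leximinLT u v := by
  have hk : countLE v t < n := hat.trans_le (countLE_le u t)
  refine ⟨⟨countLE v t, hk⟩, fun j hj => ?_, ?_⟩
  · have hiff : ∀ s, sortVec u j ≤ s ↔ sortVec v j ≤ s := by
      intro s
      rw [sortVec_le_iff, sortVec_le_iff]
      rcases lt_or_ge s t with hs | hs
      · rw [hbelow s hs]
      · have hj' : (j : ℕ) < countLE v t := hj
        exact iff_of_true ((hj'.trans hat).trans_le (countLE_mono u hs))
          (hj'.trans_le (countLE_mono v hs))
    exact le_antisymm ((hiff _).2 le_rfl) ((hiff _).1 le_rfl)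
  · show sortVec u _ < sortVec v _
    refine ((sortVec_le_iff u t _).2 hat).trans_lt (not_le.1 fun hle => ?_)
    exact lt_irrefl _ ((sortVec_le_iff v t _).1 hle)

theorem leximinLT_of_inf'_lt_inf' {u v : Fin n → ℝ} {D : Finset (Fin n)} (hD : D.Nonempty)
    (hoff : ∀ i ∉ D, u i = v i) (hlt : D.inf' hD u < D.inf' hD v) : leximinLT u v := by
  set t := D.inf' hD u
  have hv : ∀ i ∈ D, t < v i := (lt_inf'_iff hD).1 hlt
  obtain ⟨i₀, hi₀, hti₀⟩ := D.exists_mem_eq_inf' hD u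
  refine leximinLT_of_countLE (t := t) (fun s hs => ?_) ?_
  · refine congrArg card (filter_congr fun i _ => ?_)
    by_cases hi : i ∈ D
    · exact iff_of_false (hs.trans_le (inf'_le u hi)).not_ge (hs.trans (hv i hi)).not_ge
    · rw [hoff i hi]
  · have hsub : univ.filter (v · ≤ t) ⊆ univ.filter (u · ≤ t) := fun i hi => by
      simp only [mem_filter, mem_univ, true_and] at hi ⊢
      have hiD : i ∉ D := fun hiD => (hv i hiD).not_ge hi
      rwa [hoff i hiD]
    refine card_lt_card ((ssubset_iff_of_subset hsub).2 ⟨i₀, ?_, ?_⟩)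
    · exact mem_filter.2 ⟨mem_univ _, hti₀.ge⟩
    · simpa using hv i₀ hi₀

/-- ε-change preserves leximin improvement: if `y` is strictly better than `x` in
the leximin order, then for all sufficiently small `ε > 0`, the vector
`x + ε(y − x)` is also strictly better than `x` in the leximin order. -/
theorem epsChange_leximin_improvement {n : ℕ} (x y : Fin n → ℝ)
    (h : leximinLT x y) :
    ∃ ε₀ > (0 : ℝ), ∀ ε ∈ Set.Ioo (0 : ℝ) ε₀,
      leximinLT x (fun i => x i + ε * (y i - x i)) := by
  set D : Finset (Fin n) := {i | x i ≠ y i}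
  have hoff : ∀ i ∉ D, x i = y i := fun i hi => by simpa [D] using hi
  have hD : D.Nonempty := by
    by_contra hempty
    have hxy : x = y := funext fun i => hoff i fun hi => hempty ⟨i, hi⟩
    exact lt_irrefl _ (hxy ▸ h)
  have hmin : D.inf' hD x ≤ D.inf' hD y := not_lt.1 fun hlt =>
    lt_asymm h (leximinLT_of_inf'_lt_inf' hD (fun i hi => (hoff i hi).symm) hlt)
  refine ⟨1, one_pos, fun ε ⟨hε₀, hε₁⟩ => leximinLT_of_inf'_lt_inf' hD
    (fun i hi => by simp [hoff i hi]) ((lt_inf'_iff hD).2 fun i hi => ?_)⟩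
  have hx : D.inf' hD x ≤ x i := inf'_le x hi
  have hy : D.inf' hD x ≤ y i := hmin.trans (inf'_le y hi)
  rcases (mem_filter.1 hi).2.lt_or_gt with hlt | hgt <;> nlinarith
end

section
/- Lower bound on per-agent utility of the leximin cake-sharing solution: in any instance with n agents with piecewise uniform utilities given by desired sets W_i ⊆ [0,1] and budget α ∈ (0,1), every leximin allocation A (a measurable subset of [0,1] with length at most α maximizing the leximin order of (ℓ(A∩W_1),…,ℓ(A∩W_n))) satisfies ℓ(A∩W_i) ≥ min{α/n, ℓ(W_i)} for every agent i. -/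
/-!
Suppose agent `i` gets `a i < min (α / n) ℓ(W i)`. The agents doing no better than `i` hold
less than `n * a i < α` of `A` inside the union `V` of their desired sets, so a small amount `δ`
of cake can be moved from `A \ V` (or from the unused budget) into `W i \ A`. Then nobody doing
no better than `i` loses, `i` gains `δ`, and every richer agent loses at most `δ`, which for
small `δ` keeps them above `a i + δ`. After capping all utilities at `a i + δ` the new allocation
is a Pareto improvement, contradicting leximin optimality, because capping preserves the leximin
order of sorted vectors.
-/

open MeasureTheory

theorem toLex_min_le_min_of_monotone {ι α : Type*} [LinearOrder ι] [LinearOrder α]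
    {u v : ι → α} (hu : Monotone u) (hv : Monotone v) (h : toLex u ≤ toLex v) (τ : α) :
    toLex (fun k => min (u k) τ) ≤ toLex (fun k => min (v k) τ) := by
  obtain h | ⟨k, hpre, hk⟩ := h.eq_or_lt
  · rw [toLex_inj.1 h]
  simp only [Pi.toLex_apply] at hpre hk
  by_cases hτ : τ ≤ u k
  · -- from `k` on, both vectors are cut down to `τ`
    refine le_of_eq (congrArg toLex (funext fun j => ?_))
    obtain hj | hj := lt_or_ge j k
    · rw [hpre j hj]
    · rw [min_eq_right (hτ.trans (hu hj)), min_eq_right (hτ.trans (hk.le.trans (hv hj)))]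
  · push Not at hτ
    refine le_of_lt ⟨k, fun j hj => ?_, ?_⟩
    · simp only [Pi.toLex_apply, hpre j hj]
    · simpa only [Pi.toLex_apply, min_eq_left hτ.le] using lt_min hk hτ

open Filter Topology in
theorem eventually_forall_le_of_pos {ι : Type*} [Finite ι] (c : ι → ℝ) :
    ∀ᶠ δ in 𝓝 (0 : ℝ), ∀ j, 0 < c j → δ ≤ c j :=
  eventually_all.2 fun j => by
    by_cases hj : 0 < c j
    · exact (eventually_lt_nhds hj).mono fun _ hδ _ => hδ.le
    · exact .of_forall fun _ h => absurd h hj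

section sortVec

open Finset

variable {n : ℕ}

theorem sortVec_le_of_lt_card {x : Fin n → ℝ} {k : Fin n} {c : ℝ}
    (h : (k : ℕ) < #{j | x j ≤ c}) : sortVec x k ≤ c := by
  by_contra! hc
  have hsub : ({j | x j ≤ c} : Finset (Fin n)) ⊆ (Iio k).map (Tuple.sort x).toEmbedding := by
    intro j hj
    rw [mem_filter] at hj
    refine mem_map.2 ⟨(Tuple.sort x).symm j, mem_Iio.2 (lt_of_not_ge fun hkj => ?_), by simp⟩
    have := Tuple.monotone_sort x hkj
    simp only [Function.comp_apply, Equiv.apply_symm_apply] at this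
    exact (hj.2.trans_lt hc).not_ge this
  have := card_le_card hsub
  rw [card_map, Fin.card_Iio] at this
  omega

theorem sortVec_mono {x y : Fin n → ℝ} (h : x ≤ y) : sortVec x ≤ sortVec y := by
  intro k
  apply sortVec_le_of_lt_card
  have hsub : (Iic k).map (Tuple.sort y).toEmbedding ⊆
      ({j | x j ≤ sortVec y k} : Finset (Fin n)) := by
    intro j hj
    obtain ⟨m, hm, rfl⟩ := mem_map.1 hj
    exact mem_filter.2 ⟨mem_univ _, (h _).trans (Tuple.monotone_sort y (mem_Iic.1 hm))⟩
  have := card_le_card hsub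
  rw [card_map, Fin.card_Iic] at this
  omega

theorem sum_sortVec (x : Fin n → ℝ) : ∑ k, sortVec x k = ∑ k, x k :=
  Equiv.sum_comp (Tuple.sort x) x

theorem sortVec_min (x : Fin n → ℝ) (τ : ℝ) :
    sortVec (fun j => min (x j) τ) = fun k => min (sortVec x k) τ := by
  have h : (fun j => min (x j) τ) ∘ Tuple.sort x
      = (fun j => min (x j) τ) ∘ Tuple.sort (fun j => min (x j) τ) :=
    Tuple.comp_sort_eq_comp_iff_monotone.2 fun p q hpq =>
      min_le_min_right τ (Tuple.monotone_sort x hpq)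
  exact h.symm

theorem leximinLE.min {x y : Fin n → ℝ} (h : leximinLE x y) (τ : ℝ) :
    leximinLE (fun j => min (x j) τ) (fun j => min (y j) τ) := by
  unfold leximinLE
  rw [sortVec_min, sortVec_min]
  exact toLex_min_le_min_of_monotone (Tuple.monotone_sort x) (Tuple.monotone_sort y) h τ

theorem not_leximinLE_of_le_of_lt {x y : Fin n → ℝ} (h : x ≤ y) {i : Fin n} (hi : x i < y i) :
    ¬ leximinLE y x := by
  have hne : sortVec x ≠ sortVec y := fun heq => by
    have := congrArg (fun z => ∑ k, z k) heq
    simp only [sum_sortVec] at this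
    exact (sum_lt_sum (fun j _ => h j) ⟨i, mem_univ i, hi⟩).ne this
  exact not_le.2 (Pi.toLex_strictMono (lt_of_le_of_ne (sortVec_mono h) hne))

end sortVec

open Set

variable {X : Type*} [MeasurableSpace X]

/-- By Sierpiński's theorem, every atomless measure has this property. -/
def MeasureTheory.Measure.HasIntermediateSubsets (μ : Measure X) : Prop :=
  ∀ s, MeasurableSet s → ∀ r ∈ Icc 0 (μ.real s), ∃ t ⊆ s, MeasurableSet t ∧ μ.real t = r

theorem Real.hasIntermediateSubsets_volume_restrict_Icc (a b : ℝ) :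
    (volume.restrict (Icc a b)).HasIntermediateSubsets := by
  intro s hs r hr
  set ν := volume.restrict (Icc a b)
  set f : ℝ → ℝ := fun c => ν.real (s ∩ Iic c)
  have hf : Continuous f := by
    refine (LipschitzWith.of_le_add fun x y => ?_).continuous
    calc f x ≤ ν.real (s ∩ Iic y ∪ Ioc y x) := by
          refine measureReal_mono fun z ⟨hzs, hzx⟩ => ?_
          obtain hzy | hzy := le_or_gt z y
          · exact Or.inl ⟨hzs, hzy⟩
          · exact Or.inr ⟨hzy, hzx⟩
      _ ≤ f y + ν.real (Ioc y x) := measureReal_union_le _ _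
      _ ≤ f y + volume.real (Ioc y x) := by
          gcongr
          rw [measureReal_restrict_apply measurableSet_Ioc]
          exact measureReal_mono inter_subset_left measure_Ioc_lt_top.ne
      _ ≤ f y + dist x y := by
          rw [Real.volume_real_Ioc, Real.dist_eq]
          gcongr
          exact max_le (le_abs_self _) (abs_nonneg _)
  have hfa : f a = 0 := by
    refine le_antisymm ?_ measureReal_nonneg
    calc f a = volume.real (s ∩ Iic a ∩ Icc a b) :=
          measureReal_restrict_apply (hs.inter measurableSet_Iic)
      _ ≤ volume.real (Icc a a) :=
          measureReal_mono (fun _ ⟨⟨_, hza⟩, hza', _⟩ => ⟨hza', hza⟩)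
            measure_Icc_lt_top.ne
      _ = 0 := by rw [Real.volume_real_Icc, sub_self, max_self]
  have hfb : f b = ν.real s := by
    simp only [f, ν, measureReal_restrict_apply (hs.inter measurableSet_Iic),
      measureReal_restrict_apply hs, inter_assoc]
    rw [inter_eq_right.2 Icc_subset_Iic_self]
  obtain ⟨c, -, hc⟩ := intermediate_value_uIcc (a := a) (b := b) hf.continuousOn
    (by rw [hfa, hfb]; exact Icc_subset_uIcc hr)
  exact ⟨s ∩ Iic c, inter_subset_left, hs.inter measurableSet_Iic, hc⟩

open Finset in
theorem measureReal_inter_biUnion_le_card_mul {ι : Type*} {μ : Measure X} {A : Set X}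
    {W : ι → Set X} {U : Finset ι} {c : ℝ} (h : ∀ j ∈ U, μ.real (A ∩ W j) ≤ c) :
    μ.real (A ∩ ⋃ j ∈ U, W j) ≤ #U * c := by
  rw [inter_iUnion₂]
  simpa using (measureReal_biUnion_finset_le U _).trans (sum_le_card_nsmul U _ c h)

namespace MeasureTheory.Measure.HasIntermediateSubsets

variable {μ : Measure X} [IsFiniteMeasure μ]

/-- Take `B = (A \ R) ∪ S` with `S ⊆ W \ A` of measure `δ` and `R ⊆ A \ V` of measure
`min δ (μ (A \ V))`. -/
theorem exists_exchange (hμ : μ.HasIntermediateSubsets) {A V W : Set X}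
    (hA : MeasurableSet A) (hV : MeasurableSet V) (hW : MeasurableSet W) (hWV : W ⊆ V)
    {α δ : ℝ} (hδ : 0 ≤ δ) (hAα : μ.real A ≤ α) (hAVα : μ.real (A ∩ V) + δ ≤ α)
    (hAW : μ.real (A ∩ W) + δ ≤ μ.real W) :
    ∃ B, MeasurableSet B ∧ μ.real B ≤ α ∧ A ∩ V ⊆ B ∧
      μ.real (A ∩ W) + δ ≤ μ.real (B ∩ W) ∧
      ∀ T, μ.real (A ∩ T) ≤ μ.real (B ∩ T) + δ := by
  obtain ⟨S, hSWA, hS, hSδ⟩ := hμ (W \ A) (hW.diff hA) δ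
    ⟨hδ, by
      rw [inter_comm] at hAW
      linarith [measureReal_inter_add_sdiff (μ := μ) (s := W) hA]⟩
  obtain ⟨R, hRAV, hR, hRδ⟩ := hμ (A \ V) (hA.diff hV) (min δ (μ.real (A \ V)))
    ⟨le_min hδ measureReal_nonneg, min_le_right _ _⟩
  have hRA : R ⊆ A := hRAV.trans sdiff_subset
  have hAVB : A ∩ V ⊆ (A \ R) ∪ S := fun x ⟨hxA, hxV⟩ =>
    Or.inl ⟨hxA, fun hxR => (hRAV hxR).2 hxV⟩
  refine ⟨(A \ R) ∪ S, (hA.diff hR).union hS, ?_, hAVB, ?_, fun T => ?_⟩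
  · have hAR : μ.real (A \ R) = μ.real A - min δ (μ.real (A \ V)) := by
      rw [measureReal_sdiff hRA hR, hRδ]
    have hAV := measureReal_inter_add_sdiff (μ := μ) (s := A) hV
    calc μ.real ((A \ R) ∪ S) ≤ μ.real (A \ R) + μ.real S := measureReal_union_le _ _
      _ ≤ α := by
        rw [hAR, hSδ]
        rcases min_choice δ (μ.real (A \ V)) with h | h <;> rw [h] <;> linarith
  · have hdisj : Disjoint (A ∩ W) S :=
      disjoint_left.2 fun x hx hxS => (hSWA hxS).2 hx.1
    calc μ.real (A ∩ W) + δ = μ.real ((A ∩ W) ∪ S) := by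
          rw [measureReal_union hdisj hS, hSδ]
      _ ≤ μ.real ((A \ R ∪ S) ∩ W) := measureReal_mono fun x hx => hx.elim
          (fun hx => ⟨hAVB ⟨hx.1, hWV hx.2⟩, hx.2⟩) (fun hx => ⟨Or.inr hx, (hSWA hx).1⟩)
  · calc μ.real (A ∩ T) ≤ μ.real ((A \ R ∪ S) ∩ T ∪ R) := by
          refine measureReal_mono fun x ⟨hxA, hxT⟩ => ?_
          by_cases hxR : x ∈ R
          · exact Or.inr hxR
          · exact Or.inl ⟨Or.inl ⟨hxA, hxR⟩, hxT⟩
      _ ≤ μ.real ((A \ R ∪ S) ∩ T) + μ.real R := measureReal_union_le _ _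
      _ ≤ μ.real ((A \ R ∪ S) ∩ T) + δ := by rw [hRδ]; gcongr; exact min_le_left _ _

open Filter Topology Finset in
theorem min_le_measureReal_inter_of_leximinLE (hμ : μ.HasIntermediateSubsets)
    {n : ℕ} {α : ℝ} {W : Fin n → Set X} (hW : ∀ j, MeasurableSet (W j))
    {A : Set X} (hA : MeasurableSet A) (hAα : μ.real A ≤ α)
    (hlex : ∀ B, MeasurableSet B → μ.real B ≤ α →
      leximinLE (fun j => μ.real (B ∩ W j)) (fun j => μ.real (A ∩ W j)))
    (i : Fin n) : min (α / n) (μ.real (W i)) ≤ μ.real (A ∩ W i) := by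
  by_contra! hlt
  set a : Fin n → ℝ := fun j => μ.real (A ∩ W j)
  set U : Finset (Fin n) := {j | a j ≤ a i}
  set V := ⋃ j ∈ U, W j
  have hUV : ∀ j, a j ≤ a i → W j ⊆ V := fun j hj =>
    subset_biUnion_of_mem (u := W) (mem_filter.2 ⟨mem_univ j, hj⟩)
  have hAV : μ.real (A ∩ V) < α := calc
    μ.real (A ∩ V) ≤ #U * a i :=
      measureReal_inter_biUnion_le_card_mul fun j hj => (mem_filter.1 hj).2
    _ ≤ n * a i := by
      gcongr
      exact_mod_cast card_le_univ U |>.trans_eq (Fintype.card_fin n)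
    _ < α := (lt_div_iff₀' (by exact_mod_cast i.pos)).1 (hlt.trans_le (min_le_left _ _))
  obtain ⟨δ, hδ : 0 < δ, hδV, hδW, hδgap⟩ :=
    (eventually_mem_nhdsWithin.and <| nhdsWithin_le_nhds <|
      (eventually_lt_nhds (sub_pos.2 hAV)).and <|
      (eventually_lt_nhds (sub_pos.2 (hlt.trans_le (min_le_right _ _)))).and <|
      eventually_forall_le_of_pos fun j => (a j - a i) / 2).exists (f := 𝓝[>] (0 : ℝ))
  obtain ⟨B, hB, hBα, hAVB, hBi, hBT⟩ := hμ.exists_exchange hA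
    (U.measurableSet_biUnion fun j _ => hW j) (hW i) (hUV i le_rfl) hδ.le hAα
    (by linarith) (by linarith)
  -- the exchange is a Pareto improvement once all utilities are capped at `a i + δ`
  refine not_leximinLE_of_le_of_lt (i := i) (fun j => ?_) ?_ ((hlex B hB hBα).min (a i + δ))
  · by_cases hj : a j ≤ a i
    · exact min_le_min_right _ <|
        measureReal_mono fun x hx => ⟨hAVB ⟨hx.1, hUV j hj hx.2⟩, hx.2⟩
    · exact (min_le_right _ _).trans <|
        le_min (by linarith [hBT (W j), hδgap j (by linarith)]) le_rfl
  · show min (a i) (a i + δ) < min (μ.real (B ∩ W i)) (a i + δ)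
    rw [min_eq_left (by linarith)]
    exact lt_min (by linarith) (by linarith)

end MeasureTheory.Measure.HasIntermediateSubsets

theorem leximin_utility_lower_bound_general {n : ℕ}
    (α : ℝ)
    (W : Fin n → Set ℝ) (hWsub : ∀ i, W i ⊆ Set.Icc 0 1)
    (hWmeas : ∀ i, MeasurableSet (W i))
    (A : Set ℝ) (hAsub : A ⊆ Set.Icc 0 1) (hAmeas : MeasurableSet A)
    (hAlen : (volume A).toReal ≤ α)
    (hlex : ∀ B : Set ℝ, B ⊆ Set.Icc 0 1 → MeasurableSet B → (volume B).toReal ≤ α →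
      leximinLE (fun i => (volume (B ∩ W i)).toReal) (fun i => (volume (A ∩ W i)).toReal)) :
    ∀ i, min (α / n) ((volume (W i)).toReal) ≤ (volume (A ∩ W i)).toReal := by
  set ν := volume.restrict (Icc (0 : ℝ) 1)
  have hν : ∀ s ⊆ Icc 0 1, ν.real s = volume.real s := fun s hs => by
    rw [measureReal_def, Measure.restrict_eq_self _ hs, measureReal_def]
  have hlexν : ∀ B, MeasurableSet B → ν.real B ≤ α →
      leximinLE (fun j => ν.real (B ∩ W j)) (fun j => ν.real (A ∩ W j)) := by
    intro B hB hBα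
    rw [measureReal_restrict_apply hB] at hBα
    convert hlex (B ∩ Icc 0 1) inter_subset_right (hB.inter measurableSet_Icc) hBα using 2 with j
    · rw [measureReal_restrict_apply (hB.inter (hWmeas j)), inter_right_comm, measureReal_def]
    · rw [hν _ (inter_subset_left.trans hAsub), measureReal_def]
  intro i
  have key := (Real.hasIntermediateSubsets_volume_restrict_Icc 0 1)
    |>.min_le_measureReal_inter_of_leximinLE (α := α) hWmeas hAmeas (by rwa [hν A hAsub]) hlexν i
  rwa [hν _ (hWsub i), hν _ (inter_subset_left.trans hAsub)] at key

/-- Lower bound on per-agent utility of the leximin cake-sharing solution: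
every leximin allocation `A` gives every agent `i` utility at least
`min (α / n) (ℓ (W i))`. -/
theorem leximin_utility_lower_bound {n : ℕ} (hn : 0 < n)
    (α : ℝ) (hα : α ∈ Set.Ioo (0 : ℝ) 1)
    (W : Fin n → Set ℝ) (hWsub : ∀ i, W i ⊆ Set.Icc 0 1)
    (hWmeas : ∀ i, MeasurableSet (W i))
    (hWpos : ∀ i, 0 < (volume (W i)).toReal)
    (A : Set ℝ) (hAsub : A ⊆ Set.Icc 0 1) (hAmeas : MeasurableSet A)
    (hAlen : (volume A).toReal ≤ α)
    (hlex : ∀ B : Set ℝ, B ⊆ Set.Icc 0 1 → MeasurableSet B → (volume B).toReal ≤ α →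
      leximinLE (fun i => (volume (B ∩ W i)).toReal) (fun i => (volume (A ∩ W i)).toReal)) :
    ∀ i, min (α / n) ((volume (W i)).toReal) ≤ (volume (A ∩ W i)).toReal :=
  leximin_utility_lower_bound_general α W hWsub hWmeas A hAsub hAmeas hAlen hlex
end

section
/- Egalitarian ratio of leximin, matching upper bound: for n ≥ 1 and α ∈ (0,1), there is an instance with n agents such that every leximin allocation A satisfies min_i ℓ(A∩W_i)/ℓ(W_i) ≤ α/(n − (n−1)α). Concretely, take W_i = [(i−1)α/n, iα/n] for i < n and W_n = [(n−1)α/n, 1]; every leximin allocation gives each agent utility exactly α/n, and agent n's ratio is (α/n)/(1 − (n−1)α/n) = α/(n − (n−1)α). -/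
open MeasureTheory

lemma le_of_leximin_const {n : ℕ} (c : ℝ) (y : Fin n → ℝ)
    (h : leximinLE (fun _ => c) y) : ∀ i, c ≤ y i := by
  have hmono : Monotone (sortVec y) := Tuple.monotone_sort y
  have hall : ∀ j, c ≤ sortVec y j := by
    by_contra hcon
    push_neg at hcon
    obtain ⟨j, hj⟩ := hcon
    have h0 : (⟨0, Nat.lt_of_le_of_lt (Nat.zero_le _) j.isLt⟩ : Fin n) ≤ j :=
      Fin.mk_le_of_le_val (Nat.zero_le _)
    have hs0 : sortVec y ⟨0, Nat.lt_of_le_of_lt (Nat.zero_le _) j.isLt⟩ < c :=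
      lt_of_le_of_lt (hmono h0) hj
    have hlt : toLex (sortVec y) < toLex (sortVec (fun _ : Fin n => c)) := by
      refine ⟨⟨0, Nat.lt_of_le_of_lt (Nat.zero_le _) j.isLt⟩, fun k hk => ?_, hs0⟩
      exact absurd hk (by simp [Fin.lt_def])
    exact absurd h (not_le_of_gt hlt)
  intro i
  have := hall ((Tuple.sort y)⁻¹ i)
  simpa [sortVec] using this

lemma vol_inter_Icc_eq_Ico (A : Set ℝ) (a b : ℝ) :
    volume (A ∩ Set.Icc a b) = volume (A ∩ Set.Ico a b) := by
  apply le_antisymm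
  · have hsub : A ∩ Set.Icc a b ⊆ (A ∩ Set.Ico a b) ∪ {b} := by
      rintro x ⟨hxA, hx1, hx2⟩
      rcases lt_or_eq_of_le hx2 with h | h
      · exact Or.inl ⟨hxA, hx1, h⟩
      · exact Or.inr h
    calc volume (A ∩ Set.Icc a b) ≤ volume ((A ∩ Set.Ico a b) ∪ {b}) := measure_mono hsub
      _ ≤ volume (A ∩ Set.Ico a b) + volume ({b} : Set ℝ) := measure_union_le _ _
      _ = volume (A ∩ Set.Ico a b) := by simp
  · exact measure_mono (Set.inter_subset_inter_right _ Set.Ico_subset_Icc_self)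

/-- Egalitarian ratio of the leximin solution, matching upper bound: in the instance
where `W i = [(i)α/n, (i+1)α/n]` for `i < n−1` and `W (n−1) = [(n−1)α/n, 1]`, every
leximin allocation gives each agent utility exactly `α/n`, and some agent's ratio is
at most `α / (n − (n−1)α)`. -/
theorem leximin_egalitarian_ratio_upper_bound {n : ℕ} (hn : 1 ≤ n)
    (α : ℝ) (hα : α ∈ Set.Ioo (0 : ℝ) 1)
    (W : Fin n → Set ℝ)
    (hW : ∀ i : Fin n, W i =
      if (i : ℕ) = n - 1 then Set.Icc ((n - 1 : ℕ) * α / n) 1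
      else Set.Icc ((i : ℕ) * α / n) (((i : ℕ) + 1) * α / n))
    (A : Set ℝ) (hAsub : A ⊆ Set.Icc 0 1) (hAmeas : MeasurableSet A)
    (hAlen : (volume A).toReal ≤ α)
    (hlex : ∀ B : Set ℝ, B ⊆ Set.Icc 0 1 → MeasurableSet B → (volume B).toReal ≤ α →
      leximinLE (fun i => (volume (B ∩ W i)).toReal) (fun i => (volume (A ∩ W i)).toReal)) :
    (∀ i, (volume (A ∩ W i)).toReal = α / n) ∧
    (∃ i, (volume (A ∩ W i)).toReal / (volume (W i)).toReal ≤ α / (n - (n - 1) * α)) := by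
  obtain ⟨hα0, hα1⟩ := hα
  have hn0 : (0 : ℝ) < n := by exact_mod_cast hn
  have hcast : ((n - 1 : ℕ) : ℝ) = (n : ℝ) - 1 := by
    push_cast [Nat.cast_sub hn]; ring
  -- endpoints
  set lo : Fin n → ℝ := fun i => (i : ℕ) * α / n with hlo
  set hi : Fin n → ℝ := fun i => if (i : ℕ) = n - 1 then 1 else ((i : ℕ) + 1) * α / n with hhi
  have hWi : ∀ i, W i = Set.Icc (lo i) (hi i) := by
    intro i
    rw [hW i]
    by_cases h : (i : ℕ) = n - 1 <;> simp [hlo, hhi, h]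
  have hhi_le_one : ∀ i, hi i ≤ 1 := by
    intro i
    simp only [hhi]
    split_ifs with h
    · exact le_refl 1
    · have hle : ((i : ℕ) : ℝ) + 1 ≤ (n : ℝ) := by
        have : (i : ℕ) + 1 ≤ n := i.isLt
        exact_mod_cast this
      rw [div_le_one hn0]
      nlinarith
  have hα_nonneg : (0:ℝ) ≤ α := hα0.le
  have hlo_nonneg : ∀ i, 0 ≤ lo i := by
    intro i
    simp only [hlo]
    exact div_nonneg (mul_nonneg (Nat.cast_nonneg _) hα_nonneg) hn0.le
  have hlo_le_hi : ∀ i, lo i ≤ hi i := by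
    intro i
    simp only [hlo, hhi]
    split_ifs with h
    · have hle : ((i : ℕ) : ℝ) ≤ (n : ℝ) := by exact_mod_cast i.isLt.le
      rw [div_le_one hn0]; nlinarith
    · have hi0 : (0:ℝ) ≤ ((i : ℕ) : ℝ) := Nat.cast_nonneg _
      have hnum : ((i:ℕ):ℝ) * α ≤ (((i:ℕ):ℝ) + 1) * α := by nlinarith
      exact div_le_div_of_nonneg_right hnum hn0.le
  -- the "balanced" allocation B = [0, α]
  have hBcomp : ∀ i, (volume (Set.Icc 0 α ∩ W i)).toReal = α / n := by
    intro i
    rw [hW i]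
    split_ifs with h
    · have hnn : (0:ℝ) ≤ ((n - 1 : ℕ) : ℝ) * α / n :=
        div_nonneg (mul_nonneg (Nat.cast_nonneg _) hα_nonneg) hn0.le
      have hub : ((n - 1 : ℕ) : ℝ) * α / n ≤ α := by
        rw [hcast, div_le_iff₀ hn0]; nlinarith
      have h1 : Set.Icc (0:ℝ) α ∩ Set.Icc (((n-1:ℕ):ℝ) * α / n) 1
          = Set.Icc (((n-1:ℕ):ℝ) * α / n) α := by
        rw [Set.Icc_inter_Icc, max_eq_right hnn, min_eq_left hα1.le]
      rw [h1, Real.volume_Icc, ENNReal.toReal_ofReal (by linarith)]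
      rw [hcast]; field_simp; ring
    · have hi0 : (0:ℝ) ≤ ((i : ℕ) : ℝ) := Nat.cast_nonneg _
      have hnn : (0:ℝ) ≤ ((i:ℕ):ℝ) * α / n :=
        div_nonneg (mul_nonneg hi0 hα_nonneg) hn0.le
      have hub : (((i : ℕ):ℝ) + 1) * α / n ≤ α := by
        rw [div_le_iff₀ hn0]
        have : ((i : ℕ) : ℝ) + 1 ≤ (n : ℝ) := by exact_mod_cast i.isLt
        nlinarith
      have h1 : Set.Icc (0:ℝ) α ∩ Set.Icc (((i:ℕ):ℝ) * α / n) ((((i:ℕ):ℝ) + 1) * α / n)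
          = Set.Icc (((i:ℕ):ℝ) * α / n) ((((i:ℕ):ℝ) + 1) * α / n) := by
        rw [Set.Icc_inter_Icc, max_eq_right hnn, min_eq_right hub]
      rw [h1, Real.volume_Icc, ENNReal.toReal_ofReal]
      · field_simp; ring
      · have hnum : ((i:ℕ):ℝ) * α ≤ (((i:ℕ):ℝ) + 1) * α := by nlinarith
        have := div_le_div_of_nonneg_right hnum hn0.le
        linarith [this]
  -- apply hlex to B
  have hBsub : Set.Icc (0:ℝ) α ⊆ Set.Icc 0 1 := Set.Icc_subset_Icc le_rfl hα1.le
  have hBlen : (volume (Set.Icc (0:ℝ) α)).toReal ≤ α := by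
    rw [Real.volume_Icc, ENNReal.toReal_ofReal (by linarith)]; linarith
  have hlexB := hlex (Set.Icc 0 α) hBsub measurableSet_Icc hBlen
  have hB' : leximinLE (fun _ : Fin n => α / n) (fun i => (volume (A ∩ W i)).toReal) := by
    have : (fun i : Fin n => (volume (Set.Icc 0 α ∩ W i)).toReal) = fun _ => α / n :=
      funext hBcomp
    rwa [this] at hlexB
  have hge : ∀ i, α / n ≤ (volume (A ∩ W i)).toReal :=
    le_of_leximin_const _ _ hB'
  -- the sum is at most α
  have hAfin : volume A ≠ ⊤ := by
    have : volume A ≤ volume (Set.Icc (0:ℝ) 1) := measure_mono hAsub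
    rw [Real.volume_Icc] at this
    exact ne_top_of_le_ne_top (by simp) this
  have hdisj : Pairwise (Function.onFun Disjoint
      (fun i : Fin n => A ∩ Set.Ico (lo i) (hi i))) := by
    have key : ∀ i j : Fin n, i < j → hi i ≤ lo j := by
      intro i j hij
      have hjn : (j : ℕ) ≤ n - 1 := by omega
      have hin : (i : ℕ) ≠ n - 1 := by
        have : (i : ℕ) < (j : ℕ) := hij
        omega
      simp only [hhi, hlo, if_neg hin]
      apply div_le_div_of_nonneg_right _ hn0.le
      have : ((i : ℕ) : ℝ) + 1 ≤ ((j : ℕ) : ℝ) := by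
        exact_mod_cast (Nat.succ_le_of_lt hij)
      nlinarith
    intro i j hij
    rcases lt_or_gt_of_ne hij with h | h
    · apply Set.disjoint_left.mpr
      rintro x ⟨-, -, hx2⟩ ⟨-, hx3, -⟩
      exact absurd (lt_of_lt_of_le hx2 (key i j h)) (not_lt_of_ge hx3)
    · apply Set.disjoint_left.mpr
      rintro x ⟨-, hx1, -⟩ ⟨-, -, hx4⟩
      exact absurd (lt_of_lt_of_le hx4 (key j i h)) (not_lt_of_ge hx1)
  have hsum_le : ∑ i : Fin n, (volume (A ∩ W i)).toReal ≤ α := by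
    have hmeas : ∀ i : Fin n, MeasurableSet (A ∩ Set.Ico (lo i) (hi i)) :=
      fun i => hAmeas.inter measurableSet_Ico
    have hUnion : ∑' i : Fin n, volume (A ∩ Set.Ico (lo i) (hi i))
        = volume (⋃ i, A ∩ Set.Ico (lo i) (hi i)) :=
      (measure_iUnion hdisj hmeas).symm
    have hUle : volume (⋃ i, A ∩ Set.Ico (lo i) (hi i)) ≤ volume A :=
      measure_mono (Set.iUnion_subset fun i => Set.inter_subset_left)
    have heq : ∀ i : Fin n, volume (A ∩ W i) = volume (A ∩ Set.Ico (lo i) (hi i)) := by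
      intro i; rw [hWi i]; exact vol_inter_Icc_eq_Ico A _ _
    have hfin : ∀ i : Fin n, volume (A ∩ W i) ≠ ⊤ :=
      fun i => ne_top_of_le_ne_top hAfin (measure_mono Set.inter_subset_left)
    have h1 : ∑ i : Fin n, volume (A ∩ W i) ≤ volume A := by
      calc ∑ i : Fin n, volume (A ∩ W i)
          = ∑ i : Fin n, volume (A ∩ Set.Ico (lo i) (hi i)) := by
            exact Finset.sum_congr rfl fun i _ => heq i
        _ = ∑' i : Fin n, volume (A ∩ Set.Ico (lo i) (hi i)) := (tsum_fintype _).symm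
        _ ≤ volume A := hUnion ▸ hUle
    calc ∑ i : Fin n, (volume (A ∩ W i)).toReal
        = (∑ i : Fin n, volume (A ∩ W i)).toReal :=
          (ENNReal.toReal_sum fun i _ => hfin i).symm
      _ ≤ (volume A).toReal := ENNReal.toReal_mono hAfin h1
      _ ≤ α := hAlen
  -- conclude equality
  have heqall : ∀ i, (volume (A ∩ W i)).toReal = α / n := by
    by_contra hcon
    push_neg at hcon
    obtain ⟨j, hj⟩ := hcon
    have hjgt : α / n < (volume (A ∩ W j)).toReal := lt_of_le_of_ne (hge j) (Ne.symm hj)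
    have : ∑ i : Fin n, (α / n) < ∑ i : Fin n, (volume (A ∩ W i)).toReal := by
      apply Finset.sum_lt_sum (fun i _ => hge i) ⟨j, Finset.mem_univ j, hjgt⟩
    rw [Finset.sum_const, Finset.card_univ, Fintype.card_fin, nsmul_eq_mul] at this
    have hnα : (n : ℝ) * (α / n) = α := by field_simp
    rw [hnα] at this
    linarith
  refine ⟨heqall, ?_⟩
  -- the agent n-1
  refine ⟨⟨n - 1, by omega⟩, ?_⟩
  have hidx : ((⟨n - 1, by omega⟩ : Fin n) : ℕ) = n - 1 := rfl
  have hWlast : W ⟨n - 1, by omega⟩ = Set.Icc (((n - 1 : ℕ) : ℝ) * α / n) 1 := by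
    rw [hW]; simp
  have hlast_le : ((n:ℝ) - 1) * α / n ≤ 1 := by
    rw [div_le_one hn0]; nlinarith
  have hden : (0 : ℝ) < (n : ℝ) - ((n : ℝ) - 1) * α := by nlinarith
  have hvol : (volume (W ⟨n - 1, by omega⟩)).toReal = 1 - ((n:ℝ) - 1) * α / n := by
    rw [hWlast, Real.volume_Icc, hcast, ENNReal.toReal_ofReal (by linarith)]
  rw [heqall, hvol]
  apply le_of_eq
  have hne1 : (n : ℝ) ≠ 0 := ne_of_gt hn0
  have hne2 : (n : ℝ) - ((n : ℝ) - 1) * α ≠ 0 := ne_of_gt hden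
  have hne3 : 1 - ((n:ℝ) - 1) * α / n ≠ 0 := by
    rw [sub_ne_zero]
    intro hcontra
    have : ((n:ℝ) - 1) * α = n := by
      field_simp at hcontra
      linarith
    nlinarith
  field_simp
end

section
/- Equivalence of leximin and MNW for two agents, intersection-heavy case: suppose n = 2 and ℓ(W_1 ∩ W_2) ≥ α. Then an allocation A with ℓ(A) ≤ α is leximin-optimal if and only if A ⊆ W_1 ∩ W_2 and ℓ(A) = α, and the same characterization holds for allocations maximizing the Nash product ℓ(A∩W_1)·ℓ(A∩W_2). -/
open MeasureTheory

/-- Two-agent leximin (weak) order on utility pairs: compare `(min, max)` lexicographically. -/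
def leximin2LE (p q : ℝ × ℝ) : Prop :=
  min p.1 p.2 < min q.1 q.2 ∨ (min p.1 p.2 = min q.1 q.2 ∧ max p.1 p.2 ≤ max q.1 q.2)


lemma vol_ne_top_of_subset_Icc {S : Set ℝ} (h : S ⊆ Set.Icc 0 1) : volume S ≠ ⊤ := by
  refine ne_top_of_le_ne_top ?_ (measure_mono h)
  simp [Real.volume_Icc]

lemma exists_subset_vol_eq {S : Set ℝ} (hSm : MeasurableSet S) (hSsub : S ⊆ Set.Icc 0 1)
    {α : ℝ} (hα0 : 0 ≤ α) (hα : α ≤ (volume S).toReal) :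
    ∃ B : Set ℝ, B ⊆ S ∧ MeasurableSet B ∧ (volume B).toReal = α := by
  have hfin : ∀ T : Set ℝ, T ⊆ S → volume T ≠ ⊤ := fun T hT =>
    ne_top_of_le_ne_top (vol_ne_top_of_subset_Icc hSsub) (measure_mono hT)
  set g : ℝ → ℝ := fun t => (volume (S ∩ Set.Iic t)).toReal with hg
  have key : ∀ a b : ℝ, a ≤ b → g a ≤ g b ∧ g b ≤ g a + (b - a) := by
    intro a b hab
    have hsplit : S ∩ Set.Iic b = (S ∩ Set.Iic a) ∪ (S ∩ Set.Ioc a b) := by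
      rw [← Set.inter_union_distrib_left, Set.Iic_union_Ioc_eq_Iic hab]
    have hle : volume (S ∩ Set.Iic b) ≤ volume (S ∩ Set.Iic a) + volume (S ∩ Set.Ioc a b) := by
      rw [hsplit]; exact measure_union_le _ _
    have h1 : g a ≤ g b :=
      ENNReal.toReal_mono (hfin _ Set.inter_subset_left)
        (measure_mono (Set.inter_subset_inter_right _ (Set.Iic_subset_Iic.mpr hab)))
    refine ⟨h1, ?_⟩
    have h2 : (volume (S ∩ Set.Ioc a b)).toReal ≤ b - a := by
      have h2' : (volume (S ∩ Set.Ioc a b)).toReal ≤ (volume (Set.Ioc a b)).toReal :=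
        ENNReal.toReal_mono (by simp [Real.volume_Ioc]) (measure_mono Set.inter_subset_right)
      rwa [Real.volume_Ioc, ENNReal.toReal_ofReal (by linarith)] at h2'
    have h3 : g b ≤ g a + (volume (S ∩ Set.Ioc a b)).toReal := by
      have := ENNReal.toReal_mono
        (ENNReal.add_ne_top.mpr ⟨hfin _ Set.inter_subset_left, hfin _ Set.inter_subset_left⟩) hle
      rwa [ENNReal.toReal_add (hfin _ Set.inter_subset_left) (hfin _ Set.inter_subset_left)] at this
    linarith
  have hcont : Continuous g := by
    have : LipschitzWith 1 g := by
      apply LipschitzWith.of_dist_le_mul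
      intro a b
      rcases le_total a b with h | h
      · obtain ⟨h1, h2⟩ := key a b h
        rw [Real.dist_eq, Real.dist_eq, abs_of_nonpos (by linarith), abs_of_nonpos (by linarith)]
        push_cast; linarith
      · obtain ⟨h1, h2⟩ := key b a h
        rw [Real.dist_eq, Real.dist_eq, abs_of_nonneg (by linarith), abs_of_nonneg (by linarith)]
        push_cast; linarith
    exact this.continuous
  have hg0 : g 0 = 0 := by
    have : S ∩ Set.Iic 0 ⊆ {0} := by
      intro x ⟨hxS, hx0⟩
      exact Set.mem_singleton_iff.mpr (le_antisymm hx0 (hSsub hxS).1)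
    have : volume (S ∩ Set.Iic 0) = 0 :=
      measure_mono_null this (by simp)
    simp [hg, this]
  have hg1 : g 1 = (volume S).toReal := by
    have : S ∩ Set.Iic 1 = S := Set.inter_eq_left.mpr (fun x hx => (hSsub hx).2)
    simp [hg, this]
  have : α ∈ Set.Icc (g 0) (g 1) := by rw [hg0, hg1]; exact ⟨hα0, hα⟩
  obtain ⟨t, _, ht⟩ := intermediate_value_Icc (by norm_num : (0:ℝ) ≤ 1) hcont.continuousOn this
  exact ⟨S ∩ Set.Iic t, Set.inter_subset_left, hSm.inter measurableSet_Iic, ht⟩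

/-- Equivalence of leximin and MNW for two agents, intersection-heavy case: if
`ℓ(W₁ ∩ W₂) ≥ α`, then a feasible allocation is leximin-optimal iff it is (up to a
null set) contained in `W₁ ∩ W₂` and has length exactly `α`, and the same
characterization holds for maximizers of the Nash product. -/
theorem leximin_mnw_equiv_two_agents_intersection_case
    (α : ℝ) (hα : α ∈ Set.Ioo (0 : ℝ) 1)
    (W₁ W₂ : Set ℝ) (hW₁ : W₁ ⊆ Set.Icc 0 1) (hW₂ : W₂ ⊆ Set.Icc 0 1)
    (hW₁m : MeasurableSet W₁) (hW₂m : MeasurableSet W₂)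
    (hint : α ≤ (volume (W₁ ∩ W₂)).toReal)
    (A : Set ℝ) (hAsub : A ⊆ Set.Icc 0 1) (hAmeas : MeasurableSet A)
    (hAlen : (volume A).toReal ≤ α) :
    ((∀ B : Set ℝ, B ⊆ Set.Icc 0 1 → MeasurableSet B → (volume B).toReal ≤ α →
        leximin2LE ((volume (B ∩ W₁)).toReal, (volume (B ∩ W₂)).toReal)
          ((volume (A ∩ W₁)).toReal, (volume (A ∩ W₂)).toReal)) ↔
      (volume (A \ (W₁ ∩ W₂)) = 0 ∧ (volume A).toReal = α)) ∧
    ((∀ B : Set ℝ, B ⊆ Set.Icc 0 1 → MeasurableSet B → (volume B).toReal ≤ α →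
        (volume (B ∩ W₁)).toReal * (volume (B ∩ W₂)).toReal ≤
          (volume (A ∩ W₁)).toReal * (volume (A ∩ W₂)).toReal) ↔
      (volume (A \ (W₁ ∩ W₂)) = 0 ∧ (volume A).toReal = α)) := by
  obtain ⟨hα0, hα1⟩ := hα
  have hW12m : MeasurableSet (W₁ ∩ W₂) := hW₁m.inter hW₂m
  have hW12sub : W₁ ∩ W₂ ⊆ Set.Icc 0 1 := fun x hx => hW₁ hx.1
  obtain ⟨B₀, hB₀sub, hB₀m, hB₀len⟩ := exists_subset_vol_eq hW12m hW12sub hα0.le hint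
  have hB₀Icc : B₀ ⊆ Set.Icc 0 1 := hB₀sub.trans hW12sub
  have hB₀W₁ : B₀ ∩ W₁ = B₀ := Set.inter_eq_left.mpr (fun x hx => (hB₀sub hx).1)
  have hB₀W₂ : B₀ ∩ W₂ = B₀ := Set.inter_eq_left.mpr (fun x hx => (hB₀sub hx).2)
  have hAfin : volume A ≠ ⊤ := vol_ne_top_of_subset_Icc hAsub
  set u₁ := (volume (A ∩ W₁)).toReal with hu₁def
  set u₂ := (volume (A ∩ W₂)).toReal with hu₂def
  have hu₁α : u₁ ≤ α :=
    le_trans (ENNReal.toReal_mono hAfin (measure_mono Set.inter_subset_left)) hAlen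
  have hu₂α : u₂ ≤ α :=
    le_trans (ENNReal.toReal_mono hAfin (measure_mono Set.inter_subset_left)) hAlen
  have hu₁0 : 0 ≤ u₁ := ENNReal.toReal_nonneg
  have hu₂0 : 0 ≤ u₂ := ENNReal.toReal_nonneg
  have hbound : ∀ B : Set ℝ, B ⊆ Set.Icc 0 1 → (volume B).toReal ≤ α →
      ∀ W : Set ℝ, (volume (B ∩ W)).toReal ≤ α := fun B hB hBα W =>
    le_trans (ENNReal.toReal_mono (vol_ne_top_of_subset_Icc hB)
      (measure_mono Set.inter_subset_left)) hBα
  -- forward characterization from optimal utilities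
  have hchar : u₁ = α → u₂ = α → volume (A \ (W₁ ∩ W₂)) = 0 ∧ (volume A).toReal = α := by
    intro h1 h2
    have hlen : (volume A).toReal = α :=
      le_antisymm hAlen
        (h1 ▸ ENNReal.toReal_mono hAfin (measure_mono Set.inter_subset_left))
    have hnull : ∀ W : Set ℝ, MeasurableSet W → (volume (A ∩ W)).toReal = α →
        volume (A \ W) = 0 := by
      intro W hWm hW
      have hsum : volume (A ∩ W) + volume (A \ W) = volume A := measure_inter_add_diff A hWm
      have hAWfin : volume (A ∩ W) ≠ ⊤ :=
        ne_top_of_le_ne_top hAfin (measure_mono Set.inter_subset_left)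
      have heq : volume (A ∩ W) = volume A :=
        (ENNReal.toReal_eq_toReal_iff' hAWfin hAfin).mp (by rw [hW, hlen])
      have h0 : volume (A ∩ W) + volume (A \ W) = volume (A ∩ W) + 0 := by
        rw [add_zero, hsum, heq]
      exact (ENNReal.add_right_inj hAWfin).mp h0
    refine ⟨?_, hlen⟩
    rw [Set.diff_inter]
    exact measure_union_null (hnull W₁ hW₁m h1) (hnull W₂ hW₂m h2)
  -- backward: from the characterization, both utilities are α
  have hback : volume (A \ (W₁ ∩ W₂)) = 0 ∧ (volume A).toReal = α → u₁ = α ∧ u₂ = α := by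
    rintro ⟨hnull, hlen⟩
    have key : ∀ W : Set ℝ, W₁ ∩ W₂ ⊆ W → volume (A ∩ W) = volume A := by
      intro W hsub
      have hA_le : volume A ≤ volume (A ∩ W) + volume (A \ (W₁ ∩ W₂)) := by
        refine le_trans (measure_mono ?_) (measure_union_le _ _)
        intro x hx
        by_cases hxW : x ∈ W₁ ∩ W₂
        · exact Or.inl ⟨hx, hsub hxW⟩
        · exact Or.inr ⟨hx, hxW⟩
      rw [hnull, add_zero] at hA_le
      exact le_antisymm (measure_mono Set.inter_subset_left) hA_le
    constructor
    · rw [hu₁def, key W₁ Set.inter_subset_left, hlen]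
    · rw [hu₂def, key W₂ Set.inter_subset_right, hlen]
  constructor
  · constructor
    · intro h
      have hopt := h B₀ hB₀Icc hB₀m (le_of_eq hB₀len)
      unfold leximin2LE at hopt
      simp only [hB₀W₁, hB₀W₂, hB₀len, min_self, max_self] at hopt
      have hminle : min u₁ u₂ ≤ α := le_trans (min_le_left _ _) hu₁α
      rcases hopt with hlt | ⟨heq, _⟩
      · exact absurd hlt (not_lt.mpr hminle)
      · have h1 : u₁ = α := le_antisymm hu₁α (heq ▸ min_le_left u₁ u₂)
        have h2 : u₂ = α := le_antisymm hu₂α (heq ▸ min_le_right u₁ u₂)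
        exact hchar h1 h2
    · intro h B hB hBm hBα
      obtain ⟨h1, h2⟩ := hback h
      have hv₁ := hbound B hB hBα W₁
      have hv₂ := hbound B hB hBα W₂
      unfold leximin2LE
      simp only [h1, h2, min_self, max_self]
      rcases lt_or_eq_of_le (le_trans (min_le_left _ _) hv₁) with hlt | heq
      · exact Or.inl hlt
      · exact Or.inr ⟨heq, max_le hv₁ hv₂⟩
  · constructor
    · intro h
      have hopt := h B₀ hB₀Icc hB₀m (le_of_eq hB₀len)
      simp only [hB₀W₁, hB₀W₂, hB₀len] at hopt
      have h1 : u₁ = α := le_antisymm hu₁α (by nlinarith)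
      have h2 : u₂ = α := le_antisymm hu₂α (by nlinarith)
      exact hchar h1 h2
    · intro h B hB hBm hBα
      obtain ⟨h1, h2⟩ := hback h
      rw [h1, h2]
      exact mul_le_mul (hbound B hB hBα W₁) (hbound B hB hBα W₂) ENNReal.toReal_nonneg hα0.le
end

section
/- Non-truthfulness of MNW via an optimization inequality: let g(x,y) = x·(2 − x/2 − y)²·(y + x/3)³ on the domain D = {(x,y) : x ≥ 0, y ≥ 0, x + y ≤ 2}. Then every maximizer (x*, y*) of g on D satisfies x* > 1. In particular, g(1.5, 0.5) = 0.84375 while g(x,y) ≤ (4/9)·(1.1)^5 < 0.72 whenever x ≤ 1. -/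
/-- The Nash welfare expression from the six-agent counterexample. -/
noncomputable def g (x y : ℝ) : ℝ := x * (2 - x / 2 - y) ^ 2 * (y + x / 3) ^ 3

/-- The domain `D = {(x,y) : x ≥ 0, y ≥ 0, x + y ≤ 2}`. -/
def D : Set (ℝ × ℝ) := {p | 0 ≤ p.1 ∧ 0 ≤ p.2 ∧ p.1 + p.2 ≤ 2}

/-- Five-term AM–GM in the form needed: `v²w³ ≤ ((2v+3w)/5)⁵`. -/
lemma amgm5 (v w : ℝ) (hv : 0 ≤ v) (hw : 0 ≤ w) :
    3125 * (v ^ 2 * w ^ 3) ≤ (2 * v + 3 * w) ^ 5 := by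
  nlinarith [sq_nonneg (v - w), mul_nonneg hv hw, mul_nonneg (mul_nonneg hv hw) hw,
    mul_nonneg (mul_nonneg hv hv) hw, sq_nonneg (v + w),
    mul_nonneg (mul_nonneg (mul_nonneg hv hw) hw) hw,
    mul_nonneg (mul_nonneg (mul_nonneg hv hv) hw) hw,
    mul_nonneg (mul_nonneg (mul_nonneg hv hv) hv) hw,
    mul_nonneg (mul_nonneg hw hw) (sq_nonneg (v - w)),
    mul_nonneg (mul_nonneg hv hw) (sq_nonneg (v - w)),
    mul_nonneg (mul_nonneg hv hv) (sq_nonneg (v - w)),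
    mul_nonneg (mul_nonneg hw (mul_nonneg hw hw)) (sq_nonneg (v - w))]

/-- Monotonicity bound: `x·(12−x)⁵ ≤ 11⁵` for `x ∈ [0,1]`. -/
lemma mono1 (x : ℝ) (h0 : 0 ≤ x) (h1 : x ≤ 1) : x * (12 - x) ^ 5 ≤ 161051 := by
  nlinarith [sq_nonneg (1 - x), sq_nonneg x,
    mul_nonneg h0 (sq_nonneg (1 - x)), sq_nonneg ((1 - x) * x)]

/-- Key bound: on `D` with `x ≤ 1`, `g(x,y) ≤ (4/9)·1.1⁵`. -/
lemma key_bound (x y : ℝ) (hx : 0 ≤ x) (hy : 0 ≤ y) (hxy : x + y ≤ 2) (h1 : x ≤ 1) :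
    g x y ≤ (4 / 9) * (1.1 : ℝ) ^ 5 := by
  have hv : 0 ≤ (3 / 2 : ℝ) * (2 - x / 2 - y) := by linarith
  have hw : 0 ≤ y + x / 3 := by linarith
  have h2 := amgm5 _ _ hv hw
  have h3 := mul_le_mul_of_nonneg_left h2 hx
  have h4 := mono1 x hx h1
  unfold g
  nlinarith [h3, h4]

/-- Every maximizer of `g` on `D` satisfies `x > 1`; moreover `g(1.5, 0.5) = 0.84375`
while `g(x,y) ≤ (4/9)·(1.1)^5 < 0.72` whenever `x ≤ 1`. -/
theorem mnw_counterexample_maximizer :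
    (∀ x y : ℝ, (x, y) ∈ D → (∀ p ∈ D, g p.1 p.2 ≤ g x y) → 1 < x) ∧
    g 1.5 0.5 = 0.84375 ∧
    (∀ x y : ℝ, (x, y) ∈ D → x ≤ 1 → g x y ≤ (4 / 9) * (1.1 : ℝ) ^ 5) ∧
    (4 / 9) * (1.1 : ℝ) ^ 5 < 0.72 := by
  have hval : g 1.5 0.5 = 0.84375 := by norm_num [g]
  have hlt : (4 / 9 : ℝ) * (1.1 : ℝ) ^ 5 < 0.72 := by norm_num
  refine ⟨?_, hval, ?_, hlt⟩
  · intro x y hxy hmax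
    by_contra h
    push_neg at h
    obtain ⟨hx, hy, hs⟩ := hxy
    have hb := key_bound x y hx hy hs h
    have hmem : ((1.5 : ℝ), (0.5 : ℝ)) ∈ D := by constructor <;> norm_num
    have := hmax _ hmem
    simp only at this
    rw [hval] at this
    linarith
  · intro x y ⟨hx, hy, hs⟩ h1
    exact key_bound x y hx hy hs h1
end
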